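/- arXiv:1505.07022 — 6 statements merged into one kernel-verified Lean document; each statement's English description precedes it below -/
import Mathlib

section
/- Let A be a Noetherian F_1-algebra (every ideal of the commutative monoid-with-zero A is finitely generated, equivalently the ascending chain condition on ideals holds). Then the polynomial F_1-algebra A[x] (the monoid algebra obtained as the wedge sum ⋁_{n∈ℕ} A x^n with the obvious multiplication) is Noetherian. -/
namespace F1a

/-- An ideal of a monoid with zero. -/
def IsIdeal {M : Type} [MonoidWithZero M] (I : Set M) : Prop :=
  (0 : M) ∈ I ∧ ∀ a x : M, x ∈ I → a * x ∈ I

/-- A finitely generated ideal of a monoid with zero. -/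
def IsFG {M : Type} [MonoidWithZero M] (I : Set M) : Prop :=
  ∃ S : Finset M, (S : Set M) ⊆ I ∧
    I = insert (0 : M) {x : M | ∃ s ∈ S, ∃ a : M, x = a * s}

/-- A monoid with zero is Noetherian if every ideal is finitely generated. -/
def IsNoetherian (M : Type) [MonoidWithZero M] : Prop :=
  ∀ I : Set M, IsIdeal I → IsFG I

variable (A : Type) [CommMonoidWithZero A]

/-- The setoid on `A × ℕ` identifying all pairs with vanishing first coordinate: the wedge
sum `⋁ₙ A xⁿ`. -/
def polySetoid : Setoid (A × ℕ) where
  r p q := p = q ∨ (p.1 = 0 ∧ q.1 = 0)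
  iseqv := by
    constructor
    · intro p; exact Or.inl rfl
    · rintro p q (rfl | ⟨h1, h2⟩)
      · exact Or.inl rfl
      · exact Or.inr ⟨h2, h1⟩
    · rintro p q r h1 h2
      rcases h1 with rfl | ⟨hp, hq⟩
      · exact h2
      · rcases h2 with rfl | ⟨hq', hr⟩
        · exact Or.inr ⟨hp, hq⟩
        · exact Or.inr ⟨hp, hr⟩

/-- The polynomial `F_1`-algebra `A[x] = ⋁ₙ A xⁿ`, with `(a xᵐ)(b xⁿ) = ab x^{m+n}`. -/
def F1Poly : Type := Quotient (polySetoid A)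

instance : CommMonoidWithZero (F1Poly A) where
  zero := Quotient.mk (polySetoid A) (0, 0)
  one := Quotient.mk (polySetoid A) (1, 0)
  mul := Quotient.map₂ (fun p q => (p.1 * q.1, p.2 + q.2)) (by
    rintro ⟨a, m⟩ ⟨a', m'⟩ h ⟨b, n⟩ ⟨b', n'⟩ h'
    rcases h with h | ⟨ha, ha'⟩ <;> rcases h' with h' | ⟨hb, hb'⟩
    · rw [h, h']
    · dsimp only at hb hb' ⊢
      exact Or.inr ⟨by rw [hb, mul_zero], by rw [hb', mul_zero]⟩
    · dsimp only at ha ha' ⊢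
      exact Or.inr ⟨by rw [ha, zero_mul], by rw [ha', zero_mul]⟩
    · dsimp only at ha ha' ⊢
      exact Or.inr ⟨by rw [ha, zero_mul], by rw [ha', zero_mul]⟩)
  mul_assoc := by
    rintro ⟨⟨a, m⟩⟩ ⟨⟨b, n⟩⟩ ⟨⟨c, k⟩⟩
    exact Quotient.sound (Or.inl (by simp [mul_assoc, add_assoc]))
  one_mul := by
    rintro ⟨⟨a, m⟩⟩
    exact Quotient.sound (Or.inl (by simp))
  mul_one := by
    rintro ⟨⟨a, m⟩⟩
    exact Quotient.sound (Or.inl (by simp))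
  mul_comm := by
    rintro ⟨⟨a, m⟩⟩ ⟨⟨b, n⟩⟩
    exact Quotient.sound (Or.inl (by simp [mul_comm, add_comm]))
  zero_mul := by
    rintro ⟨⟨a, m⟩⟩
    exact Quotient.sound (Or.inr ⟨zero_mul a, rfl⟩)
  mul_zero := by
    rintro ⟨⟨a, m⟩⟩
    exact Quotient.sound (Or.inr ⟨mul_zero a, rfl⟩)

end F1a

/-! Every element of `A[x]` is a monomial, so an ideal `I` is the wedge of the ideals
`Iₙ = {a | a xⁿ ∈ I}` of `A`, which increase with `n` because `x · a xⁿ = a xⁿ⁺¹`. By the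
ascending chain condition in `A` they stabilise at some `N`, and the generators of `I₀, …, I_N`,
placed in their degrees, generate `I`. -/

namespace F1a

section Ideals

variable {M : Type} [MonoidWithZero M]

/-- Matches the generated set in `IsFG`: `IsFG I` unfolds to `∃ S, ↑S ⊆ I ∧ I = span ↑S`. -/
def span (S : Set M) : Set M :=
  insert 0 {x : M | ∃ s ∈ S, ∃ a : M, x = a * s}

theorem IsIdeal.span_subset {I S : Set M} (hI : IsIdeal I) (hS : S ⊆ I) : span S ⊆ I := by
  rintro x (rfl | ⟨s, hs, a, rfl⟩)
  · exact hI.1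
  · exact hI.2 a s (hS hs)

theorem isFG_of_subset_span {I : Set M} (hI : IsIdeal I) {S : Finset M} (hSI : (S : Set M) ⊆ I)
    (hIS : I ⊆ span (S : Set M)) : IsFG I :=
  ⟨S, hSI, hIS.antisymm (hI.span_subset hSI)⟩

theorem isIdeal_iUnion {ι : Type} [Nonempty ι] {I : ι → Set M} (hI : ∀ i, IsIdeal (I i)) :
    IsIdeal (⋃ i, I i) := by
  refine ⟨Set.mem_iUnion.2 ⟨Classical.arbitrary ι, (hI _).1⟩, fun a x hx => ?_⟩
  obtain ⟨i, hx⟩ := Set.mem_iUnion.1 hx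
  exact Set.mem_iUnion.2 ⟨i, (hI i).2 a x hx⟩

/-- The ascending chain condition, for arbitrary directed families of ideals. -/
theorem IsNoetherian.exists_forall_subset (hM : IsNoetherian M) {ι : Type} [Nonempty ι]
    {I : ι → Set M} (hI : ∀ i, IsIdeal (I i)) (hdir : Directed (· ⊆ ·) I) :
    ∃ i, ∀ j, I j ⊆ I i := by
  obtain ⟨F, hFU, hUF⟩ := hM _ (isIdeal_iUnion hI)
  obtain ⟨i, hFi⟩ := hdir.exists_mem_subset_of_finset_subset_biUnion hFU
  refine ⟨i, fun j => ?_⟩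
  calc I j ⊆ ⋃ k, I k := Set.subset_iUnion I j
    _ = span (F : Set M) := hUF
    _ ⊆ I i := (hI i).span_subset hFi

end Ideals

namespace F1Poly

variable {A : Type} [CommMonoidWithZero A]

/-- The monomial `a xⁿ`. -/
def mk (a : A) (n : ℕ) : F1Poly A := Quotient.mk (polySetoid A) (a, n)

theorem mk_mul (a b : A) (m n : ℕ) : mk a m * mk b n = mk (a * b) (m + n) := rfl

@[simp]
theorem mk_zero (n : ℕ) : mk (0 : A) n = 0 :=
  Quotient.sound (Or.inr ⟨rfl, rfl⟩)

theorem exists_eq_mk (p : F1Poly A) : ∃ a n, p = mk a n := by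
  obtain ⟨⟨a, n⟩⟩ := p
  exact ⟨a, n, rfl⟩

/-- The ideal `Iₙ` of `A` with `I = ⋁ₙ Iₙ xⁿ`. -/
def coeffIdeal (I : Set (F1Poly A)) (n : ℕ) : Set A := {a | mk a n ∈ I}

end F1Poly

namespace IsIdeal

open F1Poly

variable {A : Type} [CommMonoidWithZero A] {I : Set (F1Poly A)}

protected theorem coeffIdeal (hI : IsIdeal I) (n : ℕ) : IsIdeal (coeffIdeal I n) := by
  refine ⟨by simpa [coeffIdeal] using hI.1, fun a x hx => ?_⟩
  have h := hI.2 (mk a 0) _ hx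
  rwa [mk_mul, zero_add] at h

theorem monotone_coeffIdeal (hI : IsIdeal I) : Monotone (coeffIdeal I) := by
  refine monotone_nat_of_le_succ fun n a ha => ?_
  have h := hI.2 (mk 1 1) _ ha
  rwa [mk_mul, one_mul, add_comm] at h

/-- The generators are the monomials `s xⁿ` with `n ≤ N` and `s` a generator of `Iₙ`. -/
theorem isFG_of_coeffIdeal_subset (hI : IsIdeal I) {N : ℕ}
    (hN : ∀ n, coeffIdeal I n ⊆ coeffIdeal I N) (hfg : ∀ n, IsFG (coeffIdeal I n)) :
    IsFG I := by
  classical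
  choose T hTI hIT using hfg
  set S : Finset (F1Poly A) := (Finset.range (N + 1)).biUnion fun n => (T n).image (mk · n)
  have mem_S {n : ℕ} (hn : n ≤ N) {s : A} (hs : s ∈ T n) : mk s n ∈ S :=
    Finset.mem_biUnion.2 ⟨n, Finset.mem_range.2 (Nat.lt_succ_of_le hn),
      Finset.mem_image.2 ⟨s, hs, rfl⟩⟩
  refine isFG_of_subset_span hI (S := S) (fun p hp => ?_) (fun p hp => ?_)
  · obtain ⟨n, -, hn⟩ := Finset.mem_biUnion.1 hp
    obtain ⟨s, hs, rfl⟩ := Finset.mem_image.1 hn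
    exact hTI n hs
  · obtain ⟨a, m, rfl⟩ := exists_eq_mk p
    have ha : a ∈ coeffIdeal I (min m N) := by
      rcases le_total m N with h | h
      · rwa [min_eq_left h]
      · rw [min_eq_right h]; exact hN m hp
    rw [hIT] at ha
    rcases ha with rfl | ⟨s, hs, c, rfl⟩
    · rw [mk_zero]; exact Set.mem_insert _ _
    · refine Or.inr ⟨mk s (min m N), mem_S (min_le_right m N) hs, mk c (m - min m N), ?_⟩
      rw [mk_mul, Nat.sub_add_cancel (min_le_left m N)]

end IsIdeal

end F1a

/-- Hilbert basis theorem over `F_1`: if `A` is a Noetherian `F_1`-algebra (every ideal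
of the commutative monoid with zero `A` is finitely generated), then the polynomial
`F_1`-algebra `A[x]` is Noetherian. -/
theorem stmt_2 (A : Type) [CommMonoidWithZero A] (hA : F1a.IsNoetherian A) :
    F1a.IsNoetherian (F1a.F1Poly A) := by
  intro I hI
  obtain ⟨N, hN⟩ := hA.exists_forall_subset hI.coeffIdeal hI.monotone_coeffIdeal.directed_le
  exact hI.isFG_of_coeffIdeal_subset hN fun n => hA _ (hI.coeffIdeal n)
end

section
/- Let B be a commutative monoid-with-zero that is a finite algebra over a submonoid-with-zero A, meaning B is finitely generated as an A-module (i.e. B = A·S for a finite subset S ⊆ B). Then every f ∈ B is integral over A: there exist n > 0, i < n and c ∈ A with f^n = c · f^i. -/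
/-- If `B` is a commutative monoid with zero that is a finite algebra over a submonoid `A`
(i.e. `B = A·S` for a finite set `S ⊆ B`), then every `f ∈ B` is integral over `A`:
there are `n > 0`, `i < n` and `c ∈ A` with `f ^ n = c * f ^ i`. -/
theorem stmt_4 (B : Type) [CommMonoidWithZero B] (A : Submonoid B)
    (S : Finset B) (hfin : ∀ b : B, ∃ a ∈ A, ∃ s ∈ S, b = a * s) :
    ∀ f : B, ∃ n : ℕ, 0 < n ∧ ∃ i : ℕ, i < n ∧ ∃ c ∈ A, f ^ n = c * f ^ i := by
  intro f
  choose a ha s hs heq using hfin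
  set t : ℕ → B := fun k => Nat.rec (s f) (fun _ prev => s (prev * f)) k with htdef
  have ht0 : t 0 = s f := rfl
  have htsucc : ∀ k, t (k + 1) = s (t k * f) := fun k => rfl
  have htS : ∀ k, t k ∈ S := by
    intro k
    induction k with
    | zero => exact hs f
    | succ k ih => rw [htsucc]; exact hs _
  have L : ∀ k i : ℕ, ∃ d ∈ A, t i * f ^ k = d * t (i + k) := by
    intro k
    induction k with
    | zero => intro i; exact ⟨1, one_mem A, by simp⟩
    | succ k ih =>
      intro i
      obtain ⟨d, hd, hdeq⟩ := ih i
      refine ⟨d * a (t (i + k) * f), mul_mem hd (ha _), ?_⟩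
      have h3 : t (i + k) * f = a (t (i + k) * f) * t (i + k + 1) := by
        rw [htsucc]; exact heq _
      calc t i * f ^ (k + 1) = (t i * f ^ k) * f := by rw [pow_succ, mul_assoc]
        _ = d * t (i + k) * f := by rw [hdeq]
        _ = d * (t (i + k) * f) := by rw [mul_assoc]
        _ = d * (a (t (i + k) * f) * t (i + k + 1)) := by conv_lhs => rw [h3]
        _ = d * a (t (i + k) * f) * t (i + (k + 1)) := by
              rw [show i + k + 1 = i + (k + 1) from rfl, mul_assoc]
  have base : ∀ i : ℕ, ∃ d ∈ A, f ^ (i + 1) = d * t i := by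
    intro i
    obtain ⟨d, hd, hdeq⟩ := L i 0
    refine ⟨a f * d, mul_mem (ha f) hd, ?_⟩
    calc f ^ (i + 1) = f * f ^ i := by rw [pow_succ, mul_comm]
      _ = a f * s f * f ^ i := by rw [← heq f]
      _ = a f * (t 0 * f ^ i) := by rw [ht0, mul_assoc]
      _ = a f * (d * t (0 + i)) := by rw [hdeq]
      _ = a f * d * t i := by rw [zero_add, mul_assoc]
  obtain ⟨i, hi, j, hj, hij, htij⟩ :
      ∃ i ∈ Finset.range (S.card + 1), ∃ j ∈ Finset.range (S.card + 1),
        i ≠ j ∧ t i = t j := by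
    obtain ⟨i, hi, j, hj, hij, htij⟩ :=
      Finset.exists_ne_map_eq_of_card_lt_of_maps_to
        (s := Finset.range (S.card + 1)) (t := S)
        (by simp) (fun k _ => htS k)
    exact ⟨i, hi, j, hj, hij, htij⟩
  wlog hlt : i < j generalizing i j
  · exact this j hj i hi (Ne.symm hij) htij.symm (by omega)
  obtain ⟨d1, hd1, hd1eq⟩ := base i
  obtain ⟨d2, hd2, hd2eq⟩ := L (j - i) i
  refine ⟨j + 1, Nat.succ_pos _, i + 1, by omega, d2, hd2, ?_⟩
  have hsum : (i + 1) + (j - i) = j + 1 := by omega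
  calc f ^ (j + 1) = f ^ (i + 1) * f ^ (j - i) := by rw [← pow_add, hsum]
    _ = d1 * (t i * f ^ (j - i)) := by rw [hd1eq, mul_assoc]
    _ = d1 * (d2 * t (i + (j - i))) := by rw [hd2eq]
    _ = d1 * (d2 * t i) := by rw [show i + (j - i) = j from by omega, ← htij]
    _ = d2 * (d1 * t i) := by rw [mul_left_comm]
    _ = d2 * f ^ (i + 1) := by rw [hd1eq]
end

section
/- Let M be an A-module over an F_1-algebra A, equipped with a Hausdorff linear topology given by a filtration of M by submodules U (closed under finite intersection and upward closed among submodules, with ⋂ U = {0}, i.e. separated). Then the canonical map M → lim_{U} M/U is a bijection; that is, every Hausdorff linearly topologised module over a monoid with zero is automatically complete (pro-discrete). -/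
open scoped Classical in
/-- A Hausdorff linearly topologised module over an `F_1`-algebra is automatically
pro-discrete (complete): given a filtration `𝒰` of submodules of `M` (closed under finite
intersections, upward closed among submodules, and separated, `⋂₀ 𝒰 = {0}`), every
compatible family in the system of quotients `M/U` (where `M/U` is modelled by the
collapsing map `x ↦ if x ∈ U then 0 else x`) lifts uniquely to `M`; i.e. the canonical map
`M → lim_U M/U` is a bijection. -/
theorem stmt_5 (A M : Type) [CommMonoidWithZero A] [Zero M] [SMul A M]
    (𝒰 : Set (Set M))
    (hmod : ∀ U ∈ 𝒰, (0 : M) ∈ U ∧ ∀ (a : A) (x : M), x ∈ U → a • x ∈ U)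
    (hinter : ∀ U ∈ 𝒰, ∀ V ∈ 𝒰, U ∩ V ∈ 𝒰)
    (hup : ∀ U ∈ 𝒰, ∀ V : Set M,
      ((0 : M) ∈ V ∧ ∀ (a : A) (x : M), x ∈ V → a • x ∈ V) → U ⊆ V → V ∈ 𝒰)
    (hsep : ⋂₀ 𝒰 = {0}) :
    ∀ x : 𝒰 → M,
      (∀ U : 𝒰, (if x U ∈ (U : Set M) then (0 : M) else x U) = x U) →
      (∀ U V : 𝒰, (U : Set M) ⊆ (V : Set M) →
        (if x U ∈ (V : Set M) then (0 : M) else x U) = x V) →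
      ∃! m : M, ∀ U : 𝒰, (if m ∈ (U : Set M) then (0 : M) else m) = x U := by
  intro x h1 h2
  by_cases hz : ∀ U : 𝒰, x U = 0
  · refine ⟨0, ?_, ?_⟩
    · intro U
      rw [if_pos (hmod U U.2).1, hz U]
    · intro m hm
      have hmem : ∀ U : 𝒰, m ∈ (U : Set M) := by
        intro U
        by_contra hmU
        have := hm U
        rw [if_neg hmU, hz U] at this
        exact hmU (this ▸ (hmod U U.2).1)
      have : m ∈ ⋂₀ 𝒰 := fun U hU => hmem ⟨U, hU⟩
      rw [hsep] at this
      exact this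
  · push_neg at hz
    obtain ⟨U₀, hU₀⟩ := hz
    have hnot : x U₀ ∉ (U₀ : Set M) := by
      intro h
      have := h1 U₀
      rw [if_pos h] at this
      exact hU₀ this.symm
    have key : ∀ V : 𝒰, (if x U₀ ∈ (V : Set M) then (0 : M) else x U₀) = x V := by
      intro V
      set W : 𝒰 := ⟨(U₀ : Set M) ∩ V, hinter U₀ U₀.2 V V.2⟩
      have hW1 : (W : Set M) ⊆ (U₀ : Set M) := Set.inter_subset_left
      have hW2 : (W : Set M) ⊆ (V : Set M) := Set.inter_subset_right
      have e1 := h2 W U₀ hW1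
      have hWU : x W ∉ (U₀ : Set M) := by
        intro h
        rw [if_pos h] at e1
        exact hU₀ e1.symm
      rw [if_neg hWU] at e1
      have e2 := h2 W V hW2
      rw [e1] at e2
      exact e2
    refine ⟨x U₀, key, ?_⟩
    intro m hm
    have := hm U₀
    have hmU : m ∉ (U₀ : Set M) := by
      intro h
      rw [if_pos h] at this
      exact hU₀ this.symm
    rw [if_neg hmU] at this
    exact this
end

section
/- Let A be a commutative monoid with zero, f ∈ A a cancellable element (fx = fy implies x = y, and fx = 0 implies x = 0), and I an ideal of A. Then {x ∈ A[f^{-1}] : the image of x in (A/I)[f^{-1}] lies in the image of A/I} = ⋃_{k∈ℕ} {g/f^k : g ∈ A, g ∈ I or g ∈ f^k·A}. -/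
open scoped Classical in
/-- Fibre product computation for `sur^Z` over `F_1`: let `A` be a commutative monoid with
zero, `f` a cancellable element, `I ⊆ A` an ideal.  Model the quotient `A/I` by the
collapsing map `x ↦ if x ∈ I then 0 else x`, and elements of the localization `A[f⁻¹]` by
fractions `g / f^k`.  Then an element `g / f^k` of `A[f⁻¹]` has image in `(A/I)[f⁻¹]`
lying in `A/I` (i.e. its image agrees with the image of some `h ∈ A`, where equality of
fractions in the localization of the quotient allows clearing by a further power `f^m`)
if and only if it admits a representation `g' / f^{k'}` (so `g * f^{k'} = g' * f^k`) with
either `g' ∈ I` or `g'` divisible by `f^{k'}` — i.e. it lies in `⋃ₖ {g/f^k : g ∈ I} ∪ A`. -/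
theorem stmt_8 (A : Type) [CommMonoidWithZero A] (f : A)
    (hf : ∀ x y : A, f * x = f * y → x = y)
    (I : Set A) (hI0 : (0 : A) ∈ I) (hImul : ∀ a x : A, x ∈ I → a * x ∈ I) :
    ∀ (g : A) (k : ℕ),
      (∃ (h : A) (m : ℕ),
          (if g * f ^ m ∈ I then (0 : A) else g * f ^ m)
            = (if h * f ^ (k + m) ∈ I then (0 : A) else h * f ^ (k + m))) ↔
      ∃ (g' : A) (k' : ℕ), g * f ^ k' = g' * f ^ k ∧
          (g' ∈ I ∨ ∃ a : A, g' = a * f ^ k') := by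
  have hfn : ∀ (n : ℕ) (x y : A), f ^ n * x = f ^ n * y → x = y := by
    intro n
    induction n with
    | zero => intro x y h; simpa using h
    | succ n ih =>
      intro x y h
      apply ih
      apply hf
      rw [← mul_assoc, ← mul_assoc, mul_comm f (f ^ n)]
      simpa [pow_succ, mul_assoc, mul_comm] using h
  intro g k
  constructor
  · rintro ⟨h, m, heq⟩
    by_cases h1 : g * f ^ m ∈ I
    · exact ⟨g * f ^ m, k + m, by simp [pow_add, mul_comm, mul_assoc, mul_left_comm], Or.inl h1⟩
    · by_cases h2 : h * f ^ (k + m) ∈ I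
      · simp only [h1, h2, if_true, if_false] at heq
        exact absurd (heq ▸ hI0) h1
      · simp only [h1, h2, if_false] at heq
        refine ⟨h, 0, ?_, Or.inr ⟨h, by simp⟩⟩
        apply hfn m
        rw [mul_comm (f ^ m) (g * f ^ 0)]
        simp only [pow_zero, mul_one]
        rw [heq, pow_add]
        simp [mul_comm, mul_assoc, mul_left_comm]
  · rintro ⟨g', k', heq, hg' | ⟨a, ha⟩⟩
    · refine ⟨0, k', ?_⟩
      have : g * f ^ k' ∈ I := by
        rw [heq, mul_comm]
        exact hImul _ _ hg'
      simp only [this, if_true, zero_mul, hI0, if_true]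
    · refine ⟨a, 0, ?_⟩
      have hg : g = a * f ^ k := by
        apply hfn k'
        rw [mul_comm (f ^ k') g, heq, ha]
        simp [mul_comm, mul_assoc, mul_left_comm]
      simp [hg]
end

section
/- Let A be a commutative monoid with zero, f ∈ A cancellable, and {T_i}_{i∈J} a finite family of ideals of A with f ∉ ⋁_{i∈J} T_i (f not in the union of the T_i). Assume each quotient map and localization is injective where stated. Then the square A/⋂_i T_i → A[f^{-1}]/⋂_i T_i, A/⋂_i T_i → ∏_i A/T_i, ∏_i A/T_i → ∏_i A[f^{-1}]/T_i is a pullback: an element of A[f^{-1}]/⋂_i T_i whose image in ∏_i A[f^{-1}]/T_i lies in ∏_i A/T_i already lies in A/⋂_i T_i. -/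
open scoped Classical in
/-- Decomposition into components is compatible with localization: let `A` be a commutative
monoid with zero, `f` a cancellable element, and `{T i}` a finite family of ideals with
`f ∉ T i` for all `i`.  Model quotients by collapsing maps and elements of `A[f⁻¹]` by
fractions `g / f^k`.  If the image of `g / f^k` in each `A[f⁻¹]/T i` lies in `A/T i`,
then its image in `A[f⁻¹]/⋂ᵢ T i` already lies in `A/⋂ᵢ T i`; i.e. the square formed by
`A/⋂T → ∏ A/Tᵢ`, `A/⋂T → A[f⁻¹]/⋂T` and `∏ A/Tᵢ → ∏ A[f⁻¹]/Tᵢ` is a pullback. -/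
theorem stmt_9 (A : Type) [CommMonoidWithZero A] (ι : Type) [Fintype ι]
    (f : A) (hf : ∀ x y : A, f * x = f * y → x = y)
    (T : ι → Set A) (hT0 : ∀ i, (0 : A) ∈ T i)
    (hTmul : ∀ i, ∀ a x : A, x ∈ T i → a * x ∈ T i)
    (hfT : ∀ i, f ∉ T i) (g : A) (k : ℕ)
    (hall : ∀ i, ∃ (h : A) (m : ℕ),
      (if g * f ^ m ∈ T i then (0 : A) else g * f ^ m)
        = (if h * f ^ (k + m) ∈ T i then (0 : A) else h * f ^ (k + m))) :
    ∃ (h : A) (m : ℕ),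
      (if g * f ^ m ∈ ⋂ i, T i then (0 : A) else g * f ^ m)
        = (if h * f ^ (k + m) ∈ ⋂ i, T i then (0 : A) else h * f ^ (k + m)) := by
  by_cases H : ∃ h₀ : A, g = h₀ * f ^ k
  · obtain ⟨h₀, hh₀⟩ := H
    refine ⟨h₀, 0, ?_⟩
    have e : g * f ^ 0 = h₀ * f ^ (k + 0) := by simp [hh₀]
    rw [e]
  · have hcan : ∀ (n : ℕ) (x y : A), f ^ n * x = f ^ n * y → x = y := by
      intro n
      induction n with
      | zero => intro x y h; simpa using h
      | succ n ih =>
        intro x y h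
        rw [pow_succ, mul_assoc, mul_assoc] at h
        exact hf x y (ih _ _ h)
    have hm : ∀ i, ∃ m, g * f ^ m ∈ T i := by
      intro i
      obtain ⟨h, m, heq⟩ := hall i
      by_contra hnot
      push_neg at hnot
      have h1 : g * f ^ m ∉ T i := hnot m
      rw [if_neg h1] at heq
      by_cases h2 : h * f ^ (k + m) ∈ T i
      · rw [if_pos h2] at heq
        exact h1 (heq ▸ hT0 i)
      · rw [if_neg h2] at heq
        refine H ⟨h, hcan m _ _ ?_⟩
        calc f ^ m * g = g * f ^ m := mul_comm _ _
          _ = h * f ^ (k + m) := heq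
          _ = f ^ m * (h * f ^ k) := by rw [pow_add, ← mul_assoc]; exact mul_comm _ _
    choose m hm using hm
    refine ⟨0, Finset.univ.sup m, ?_⟩
    have hin : g * f ^ (Finset.univ.sup m) ∈ ⋂ i, T i := by
      rw [Set.mem_iInter]
      intro i
      obtain ⟨d, hd⟩ := Nat.exists_eq_add_of_le (Finset.le_sup (Finset.mem_univ i) : m i ≤ Finset.univ.sup m)
      rw [hd, pow_add, ← mul_assoc, mul_comm]
      exact hTmul i _ _ (hm i)
    have hin0 : (0 : A) * f ^ (k + Finset.univ.sup m) ∈ ⋂ i, T i := by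
      rw [zero_mul]; exact Set.mem_iInter.2 hT0
    rw [if_pos hin, if_pos hin0]
end

section
/- Let A be an F_1-algebra (commutative monoid with zero), T = (t_1, t_2) an ideal generated by two elements, and consider the Rees algebra R_T = ⊕_{n∈ℕ} T^n with the blow-up Proj R_T covered by the two charts A[T/t_1] and A[T/t_2]. Suppose f is a global function on the blow-up, i.e. f restricts on the chart (t_i ≠ 0) to f̃_i / t_i^{n_i} with f̃_i ∈ T^{n_i}, and the representatives can be chosen as f̃_i = c_i t_j^{n_i} (j ≠ i, c_i ∈ A), with the gluing relation f̃_1 t_2^{n_2} = f̃_2 t_1^{n_1} in T^{n_1+n_2}. Then if n_1, n_2 > 0, the element f_1^{n_1(n_1+n_2)} = c_1^{n_2} c_2^{n_1} lies in the image of A in A[t_1^{-1}]; in particular f is integral over A (satisfies f^{N} ∈ A·f^{0} for N = n_1(n_1+n_2) up to the identification). -/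
/-- Finiteness for blow-ups over `F_1` (key computation): let `A` be a commutative monoid
with zero, `T = (t₁, t₂)` an ideal, and let `f` be a global function on the blow-up along
`T`, restricting on the two charts to `f̃ᵢ / tᵢ^{nᵢ}` with `f̃₁ = c₁ t₂^{n₁}`,
`f̃₂ = c₂ t₁^{n₂}` and gluing relation `f̃₁ t₂^{n₂} = f̃₂ t₁^{n₁}`.  If `n₁, n₂ > 0` then
`f̃₁^{n₁+n₂} = c₁^{n₂} c₂^{n₁} t₁^{n₁(n₁+n₂)}` in `A`, so that in the localization
`A[t₁⁻¹]` the power `(f̃₁/t₁^{n₁})^{n₁+n₂} = c₁^{n₂} c₂^{n₁}` lies in the image of `A`. -/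
theorem stmt_13 (A : Type) [CommMonoidWithZero A]
    (t1 t2 c1 c2 ft1 ft2 : A) (n1 n2 : ℕ) (hn1 : 0 < n1) (hn2 : 0 < n2)
    (h1 : ft1 = c1 * t2 ^ n1) (h2 : ft2 = c2 * t1 ^ n2)
    (hrel : ft1 * t2 ^ n2 = ft2 * t1 ^ n1) :
    ft1 ^ (n1 + n2) = c1 ^ n2 * c2 ^ n1 * t1 ^ (n1 * (n1 + n2)) ∧
    (Localization.mk ft1 ⟨t1 ^ n1, n1, rfl⟩ :
        Localization (Submonoid.powers t1)) ^ (n1 + n2)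
      = Localization.mk (c1 ^ n2 * c2 ^ n1) 1 := by
  have key : ft1 ^ (n1 + n2) = c1 ^ n2 * c2 ^ n1 * t1 ^ (n1 * (n1 + n2)) := by
    calc ft1 ^ (n1 + n2) = c1 ^ n2 * (ft1 * t2 ^ n2) ^ n1 := by
          simp only [h1, mul_pow, ← pow_mul, ← pow_add, pow_add, Nat.mul_add, Nat.add_mul,
            Nat.mul_comm n2 n1]
          simp [mul_comm, mul_left_comm, mul_assoc, pow_add]
      _ = c1 ^ n2 * (ft2 * t1 ^ n1) ^ n1 := by rw [hrel]
      _ = c1 ^ n2 * c2 ^ n1 * t1 ^ (n1 * (n1 + n2)) := by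
          simp only [h2, mul_pow, ← pow_mul, Nat.mul_add, Nat.mul_comm n2 n1]
          simp [mul_comm, mul_left_comm, mul_assoc, pow_add]
  refine ⟨key, ?_⟩
  rw [Localization.mk_pow]
  rw [Localization.mk_eq_mk_iff, Localization.r_iff_exists]
  refine ⟨1, ?_⟩
  simp only [OneMemClass.coe_one, one_mul, SubmonoidClass.coe_pow, SubmonoidClass.mk_pow]
  rw [key, ← pow_mul]
  exact mul_comm _ _
end
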